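/- arXiv:0910.1123 — 3 statements merged into one kernel-verified Lean document; each statement's English description precedes it below -/
import Mathlib

section
/- For every x ∈ [0,1), the series ∑_{i=1}^∞ a_i(p)·x^i converges and equals S_p(x); that is, −log((√((1−p)² + 4p(1−x)) − (1−p))/(2p)) = ∑_{i=1}^∞ [∑_{k=0}^{i−1} binom(2i−1,k)·p^k] / (i·(1+p)^{2i−1}) · x^i. -/
open Real Filter

noncomputable def qp (p x : ℝ) : ℝ :=
  (Real.sqrt ((1 - p) ^ 2 + 4 * p * x) - (1 - p)) / (2 * p)

noncomputable def aCoeff (p : ℝ) (i : ℕ) : ℝ :=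
  (∑ k ∈ Finset.range i, (Nat.choose (2 * i - 1) k : ℝ) * p ^ k) /
    (i * (1 + p) ^ (2 * i - 1))

noncomputable def Gpart (p : ℝ) (N : ℕ) : ℝ := ∑ i ∈ Finset.Icc 1 N, aCoeff p i

noncomputable def Sp (p x : ℝ) : ℝ := - Real.log (qp p (1 - x))

noncomputable def rhoN (p μ : ℝ) (N : ℕ) (x : ℝ) : ℝ :=
  (μ + (∑ i ∈ Finset.Icc 1 N, aCoeff p i * x ^ i) + x ^ N) / (μ + Gpart p N + 1)

noncomputable def lamBarN (p μ : ℝ) (N : ℕ) (x : ℝ) : ℝ :=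
  Real.exp (-(μ + Gpart p N + 1) * rhoN p μ N (1 - x))

noncomputable def deSym (p μ : ℝ) (N : ℕ) (x : ℝ) : ℝ :=
  ((1 - p) + p * lamBarN p μ N x) * lamBarN p μ N x

noncomputable def cornerMap (p μ : ℝ) (N : ℕ) (α ε₁ ε₂ : ℝ) (y : ℝ) : ℝ :=
  ((1 - p) + p * Real.exp (-(α * (1 - ε₁)))) *
    Real.exp (-(α * (1 - ε₂)) * rhoN p μ N (1 - y))


/-!
The coefficient `(i + 1) * aCoeff p (i + 1)` is a partial binomial sum
`∑_{k ≤ i} C(2i+1, k) p^k / (1+p)^(2i+1)`. Induction on `i` via Pascal's rule shows that it equals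
`1/2 + (1-p)/(2(1+p)) * ∑_{n ≤ i} C(2n, n) (p/(1+p)²)^n`. Multiplying by `t^i`, summing, and using
`∑ C(2n, n) u^n = (1 - 4u)^(-1/2)` identifies `∑ (i+1) a_{i+1} t^i` with the derivative of `S_p`.
All coefficients are nonnegative, so the series may be integrated termwise on `[0, x]`, and
`S_p(0) = 0` gives the claim.
-/

open Finset Polynomial MeasureTheory
open scoped Nat

lemma ascPochhammer_eval_half_mul_four_pow (n : ℕ) :
    (ascPochhammer ℝ n).eval 2⁻¹ * 4 ^ n = n ! * n.centralBinom := by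
  induction n with
  | zero => simp
  | succ n ih =>
    have h : ((n : ℝ) + 1) * (n + 1).centralBinom = 2 * (2 * n + 1) * n.centralBinom := by
      exact_mod_cast Nat.succ_mul_centralBinom_succ n
    rw [ascPochhammer_succ_eval, Nat.factorial_succ]
    push_cast
    linear_combination (4 : ℝ) * (2⁻¹ + n) * ih - (n ! : ℝ) * h

lemma Ring.multichoose_half (n : ℕ) :
    Ring.multichoose (2⁻¹ : ℝ) n = n.centralBinom / 4 ^ n := by
  have h := Ring.factorial_nsmul_multichoose_eq_ascPochhammer (2⁻¹ : ℝ) n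
  rw [ascPochhammer_smeval_eq_eval, nsmul_eq_mul] at h
  rw [eq_div_iff (by positivity), ← mul_right_inj' (by positivity : (n ! : ℝ) ≠ 0),
    ← mul_assoc, h, ascPochhammer_eval_half_mul_four_pow]

lemma hasSum_centralBinom_mul_pow {u : ℝ} (hu : |u| < 4⁻¹) :
    HasSum (fun n ↦ (n.centralBinom : ℝ) * u ^ n) (1 / √(1 - 4 * u)) := by
  have h4u : 4 * u ∈ Metric.eball (0 : ℝ) 1 := by
    rw [Metric.mem_eball, edist_zero_right, ← ofReal_norm, Real.norm_eq_abs,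
      abs_mul, ENNReal.ofReal_lt_one]
    norm_num; linarith
  have h := (Real.one_div_one_sub_rpow_hasFPowerSeriesOnBall_zero 2⁻¹).hasSum h4u
  simp only [FormalMultilinearSeries.ofScalars_apply_eq, ← Ring.multichoose_eq,
    Ring.multichoose_half, zero_add, smul_eq_mul] at h
  rw [Real.sqrt_eq_rpow, one_div 2]
  refine h.congr_fun fun n ↦ ?_
  rw [mul_pow]; field_simp

section
variable {R : Type*} [CommRing R]

lemma sum_range_choose_succ_mul_pow (p : R) (m j : ℕ) :
    ∑ k ∈ range (j + 1), ((m + 1).choose k : R) * p ^ k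
      = ∑ k ∈ range (j + 1), (m.choose k : R) * p ^ k
        + p * ∑ k ∈ range j, (m.choose k : R) * p ^ k := by
  simp only [sum_range_succ' _ j, Nat.choose_succ_succ, Nat.cast_add, add_mul,
    sum_add_distrib, mul_sum, Nat.choose_zero_right, pow_succ]
  have : ∀ k ∈ range j, (m.choose k : R) * (p ^ k * p) = p * ((m.choose k : R) * p ^ k) :=
    fun k _ ↦ by ring
  rw [sum_congr rfl this]
  ring

lemma sum_range_choose_two_mul_add_three_mul_pow (p : R) (i : ℕ) :
    ∑ k ∈ range (i + 2), ((2 * i + 3).choose k : R) * p ^ k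
      = (1 + p) ^ 2 * ∑ k ∈ range (i + 1), ((2 * i + 1).choose k : R) * p ^ k
        + (2 * i + 1).choose i * (p ^ (i + 1) - p ^ (i + 2)) := by
  have h₁ := sum_range_choose_succ_mul_pow p (2 * i + 2) (i + 1)
  have h₂ := sum_range_choose_succ_mul_pow p (2 * i + 1) (i + 1)
  have h₃ := sum_range_choose_succ_mul_pow p (2 * i + 1) i
  have h₄ := sum_range_succ (fun k ↦ ((2 * i + 1).choose k : R) * p ^ k) (i + 1)
  have h₅ := sum_range_succ (fun k ↦ ((2 * i + 1).choose k : R) * p ^ k) i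
  have hsymm : (2 * i + 1).choose (i + 1) = (2 * i + 1).choose i := by
    rw [← Nat.choose_symm (by omega), show 2 * i + 1 - (i + 1) = i by omega]
  rw [hsymm] at h₄
  linear_combination h₁ + h₂ + p * h₃ + h₄ - p ^ 2 * h₅

lemma Nat.centralBinom_succ_eq_two_mul_choose (i : ℕ) :
    (i + 1).centralBinom = 2 * (2 * i + 1).choose i := by
  rw [Nat.centralBinom_eq_two_mul_choose, show 2 * (i + 1) = 2 * i + 1 + 1 by ring,
    Nat.choose_succ_succ, ← Nat.choose_symm_half]
  ring

lemma two_mul_sum_range_choose_mul_pow (p : R) (i : ℕ) :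
    2 * ∑ k ∈ range (i + 1), ((2 * i + 1).choose k : R) * p ^ k
      = (1 + p) ^ (2 * i + 1)
        + (1 - p) * ∑ n ∈ range (i + 1), (n.centralBinom : R) * p ^ n * (1 + p) ^ (2 * (i - n)) := by
  induction i with
  | zero => simp [one_add_one_eq_two]
  | succ i ih =>
    have hcb : ((i + 1).centralBinom : R) = 2 * (2 * i + 1).choose i := by
      rw [Nat.centralBinom_succ_eq_two_mul_choose, Nat.cast_mul, Nat.cast_ofNat]
    have hsum : ∑ n ∈ range (i + 2), (n.centralBinom : R) * p ^ n * (1 + p) ^ (2 * (i + 1 - n))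
        = (1 + p) ^ 2 * ∑ n ∈ range (i + 1), (n.centralBinom : R) * p ^ n * (1 + p) ^ (2 * (i - n))
          + ((i + 1).centralBinom : R) * p ^ (i + 1) := by
      rw [sum_range_succ, Nat.sub_self, mul_zero, pow_zero, mul_one, mul_sum]
      congr 1
      refine sum_congr rfl fun n hn ↦ ?_
      rw [show 2 * (i + 1 - n) = 2 * (i - n) + 2 by grind, pow_add]
      ring
    rw [show 2 * (i + 1) + 1 = 2 * i + 3 by ring, sum_range_choose_two_mul_add_three_mul_pow, hsum]
    linear_combination (1 + p) ^ 2 * ih - (1 - p) * p ^ (i + 1) * hcb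

end

lemma succ_mul_aCoeff_succ {p : ℝ} (hp : 1 + p ≠ 0) (i : ℕ) :
    (i + 1) * aCoeff p (i + 1)
      = 1 / 2 + (1 - p) / (2 * (1 + p)) *
          ∑ n ∈ range (i + 1), (n.centralBinom : ℝ) * (p / (1 + p) ^ 2) ^ n := by
  have hkey := two_mul_sum_range_choose_mul_pow p i
  have hterm : ∀ n ∈ range (i + 1), (n.centralBinom : ℝ) * p ^ n * (1 + p) ^ (2 * (i - n))
      = (1 + p) ^ (2 * i) * ((n.centralBinom : ℝ) * (p / (1 + p) ^ 2) ^ n) := by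
    intro n hn
    have hn : n ≤ i := Nat.lt_succ_iff.mp (mem_range.mp hn)
    rw [show 2 * i = 2 * (i - n) + 2 * n by omega, pow_add, pow_mul _ 2 n, div_pow]
    field_simp
  rw [sum_congr rfl hterm, ← mul_sum] at hkey
  rw [aCoeff, show 2 * (i + 1) - 1 = 2 * i + 1 by omega]
  push_cast
  field_simp
  linear_combination (1 + p) * hkey

lemma hasSum_sum_range_mul_pow {𝕜 : Type*} [NormedField 𝕜] [CompleteSpace 𝕜] {b : ℕ → 𝕜}
    {B t : 𝕜} (hb : HasSum (fun n ↦ b n * t ^ n) B) (hb' : Summable fun n ↦ ‖b n * t ^ n‖)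
    (ht : ‖t‖ < 1) :
    HasSum (fun i ↦ (∑ n ∈ range (i + 1), b n) * t ^ i) (B / (1 - t)) := by
  have hgeom := hasSum_geometric_of_norm_lt_one ht
  have hprod := hasSum_sum_range_mul_of_summable_norm hb'
    (by simpa only [norm_pow] using summable_geometric_of_lt_one (norm_nonneg t) ht :
      Summable fun n ↦ ‖t ^ n‖)
  rw [hb.tsum_eq, hgeom.tsum_eq, ← div_eq_mul_inv] at hprod
  refine hprod.congr_fun fun i ↦ ?_
  rw [sum_mul]
  refine sum_congr rfl fun n hn ↦ ?_
  rw [mul_assoc, ← pow_add, Nat.add_sub_cancel' (Nat.lt_succ_iff.mp (mem_range.mp hn))]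

noncomputable def SpDeriv (p t : ℝ) : ℝ :=
  1 / (2 * (1 - t)) + (1 - p) / (2 * (1 - t) * √((1 + p) ^ 2 - 4 * p * t))

lemma four_mul_mul_abs_lt_one_add_sq {p t : ℝ} (hp : 0 ≤ p) (ht : |t| < 1) :
    4 * p * |t| < (1 + p) ^ 2 := by
  rcases hp.eq_or_lt with rfl | hp
  · norm_num
  · nlinarith [sq_nonneg (1 - p)]

lemma hasSum_succ_mul_aCoeff_succ_mul_pow {p t : ℝ} (hp : 0 ≤ p) (ht : |t| < 1) :
    HasSum (fun i : ℕ ↦ ((i + 1) * aCoeff p (i + 1)) * t ^ i) (SpDeriv p t) := by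
  have h1p : 0 < 1 + p := by linarith
  have hpt := four_mul_mul_abs_lt_one_add_sq hp ht
  have hD : 0 < (1 + p) ^ 2 - 4 * p * t := by nlinarith [le_abs_self t]
  set v := p / (1 + p) ^ 2
  have hvt : |v * t| < 4⁻¹ := by
    rw [abs_mul, abs_of_nonneg (by positivity : 0 ≤ v), div_mul_eq_mul_div,
      div_lt_iff₀ (by positivity)]
    linarith
  have hsqrt : √(1 - 4 * (v * t)) = √((1 + p) ^ 2 - 4 * p * t) / (1 + p) := by
    rw [show 1 - 4 * (v * t) = ((1 + p) ^ 2 - 4 * p * t) / (1 + p) ^ 2 by unfold v; field_simp,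
      Real.sqrt_div hD.le, Real.sqrt_sq h1p.le]
  have hcb : HasSum (fun n ↦ ((n.centralBinom : ℝ) * v ^ n) * t ^ n)
      ((1 + p) / √((1 + p) ^ 2 - 4 * p * t)) := by
    simpa only [mul_pow, mul_assoc, hsqrt, one_div_div] using hasSum_centralBinom_mul_pow hvt
  have hcb_norm : Summable fun n ↦ ‖(n.centralBinom : ℝ) * v ^ n * t ^ n‖ := by
    simpa only [norm_mul, norm_pow, Real.norm_natCast, Real.norm_eq_abs, abs_mul, Nat.abs_cast,
      abs_of_nonneg (by positivity : 0 ≤ v), mul_assoc, ← mul_pow] using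
      (hasSum_centralBinom_mul_pow (by rwa [abs_abs] : |(|v * t|)| < 4⁻¹)).summable
  have hsum := ((hasSum_geometric_of_abs_lt_one ht).mul_left (1 / 2)).add
    ((hasSum_sum_range_mul_pow hcb hcb_norm ht).mul_left ((1 - p) / (2 * (1 + p))))
  have hval : SpDeriv p t = 1 / 2 * (1 - t)⁻¹
      + (1 - p) / (2 * (1 + p)) * ((1 + p) / √((1 + p) ^ 2 - 4 * p * t) / (1 - t)) := by
    unfold SpDeriv
    field_simp
  rw [hval]
  refine hsum.congr_fun fun i ↦ ?_
  rw [succ_mul_aCoeff_succ h1p.ne']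
  ring

lemma aCoeff_nonneg {p : ℝ} (hp : 0 ≤ p) (i : ℕ) : 0 ≤ aCoeff p i := by
  unfold aCoeff
  positivity

lemma Sp_zero {p : ℝ} (hp : 0 < p) : Sp p 0 = 0 := by
  rw [Sp, qp, sub_zero, show (1 - p) ^ 2 + 4 * p * 1 = (1 + p) ^ 2 by ring,
    Real.sqrt_sq (by linarith), show 1 + p - (1 - p) = 2 * p by ring, div_self (by positivity),
    Real.log_one, neg_zero]

lemma hasDerivAt_Sp {p t : ℝ} (hp : 0 < p) (ht : t < 1) : HasDerivAt (Sp p) (SpDeriv p t) t := by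
  have hD : 0 < (1 - p) ^ 2 + 4 * p * (1 - t) := by nlinarith [sq_nonneg (1 - p)]
  have hsp : 1 - p < √((1 - p) ^ 2 + 4 * p * (1 - t)) :=
    Real.lt_sqrt_of_sq_lt (by nlinarith)
  have hinner : HasDerivAt (fun x ↦ (1 - p) ^ 2 + 4 * p * (1 - x)) (-(4 * p)) t := by
    simpa using (((hasDerivAt_id t).const_sub 1).const_mul (4 * p)).const_add ((1 - p) ^ 2)
  have hq := ((hinner.sqrt hD.ne').sub_const (1 - p)).div_const (2 * p)
  have hSp := (hq.log (div_pos (by linarith) (by positivity)).ne').neg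
  refine hSp.congr_deriv ?_
  unfold SpDeriv
  rw [show (1 + p) ^ 2 - 4 * p * t = (1 - p) ^ 2 + 4 * p * (1 - t) by ring]
  set s := √((1 - p) ^ 2 + 4 * p * (1 - t))
  have hs2 : s ^ 2 = (1 - p) ^ 2 + 4 * p * (1 - t) := Real.sq_sqrt hD.le
  have : s ≠ 0 := (Real.sqrt_pos.mpr hD).ne'
  have : s - (1 - p) ≠ 0 := by linarith
  have : 1 - t ≠ 0 := by linarith
  field_simp
  linear_combination -hs2

lemma continuousOn_SpDeriv {p : ℝ} (hp : 0 < p) : ContinuousOn (SpDeriv p) (Set.Iio 1) := by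
  intro t (ht : t < 1)
  have hD : 0 < (1 + p) ^ 2 - 4 * p * t := by
    nlinarith [sq_nonneg (1 - p), mul_pos hp (sub_pos.mpr ht)]
  have h1 : 2 * (1 - t) ≠ 0 := by linarith
  have h2 : 2 * (1 - t) * √((1 + p) ^ 2 - 4 * p * t) ≠ 0 :=
    mul_ne_zero h1 (Real.sqrt_pos.mpr hD).ne'
  unfold SpDeriv
  exact ContinuousAt.continuousWithinAt (by fun_prop (disch := assumption))

lemma hasSum_div_succ_mul_pow_succ_of_hasSum {c : ℕ → ℝ} {f : ℝ → ℝ} {x : ℝ}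
    (hc : ∀ n, 0 ≤ c n) (hx : 0 ≤ x)
    (hf : ∀ t ∈ Set.Icc 0 x, HasSum (fun n ↦ c n * t ^ n) (f t)) :
    HasSum (fun n : ℕ ↦ c n / (n + 1) * x ^ (n + 1)) (∫ t in 0..x, f t) := by
  have hmem : ∀ t ∈ Set.uIoc 0 x, t ∈ Set.Icc 0 x := by
    rw [Set.uIoc_of_le hx]
    exact fun t ht ↦ Set.Ioc_subset_Icc_self ht
  have h := intervalIntegral.hasSum_integral_of_dominated_convergence (μ := volume)
    (F := fun n t ↦ c n * t ^ n) (fun n _ ↦ c n * x ^ n)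
    (fun n ↦ (continuous_const.mul (continuous_pow n)).aestronglyMeasurable)
    (fun n ↦ ae_of_all _ fun t ht ↦ ?_) (ae_of_all _ fun _ _ ↦ (hf x ⟨hx, le_rfl⟩).summable)
    intervalIntegrable_const (ae_of_all _ fun t ht ↦ hf t (hmem t ht))
  · refine h.congr_fun fun n ↦ ?_
    rw [intervalIntegral.integral_const_mul, integral_pow]
    ring
  · obtain ⟨ht0, htx⟩ := hmem t ht
    rw [Real.norm_eq_abs, abs_of_nonneg (mul_nonneg (hc n) (pow_nonneg ht0 n))]
    exact mul_le_mul_of_nonneg_left (pow_le_pow_left₀ ht0 htx n) (hc n)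

theorem stmt3_general (p : ℝ) (hp0 : 0 < p) :
    ∀ x : ℝ, 0 ≤ x → x < 1 →
      HasSum (fun i : ℕ => aCoeff p (i + 1) * x ^ (i + 1)) (Sp p x) := by
  intro x hx0 hx1
  have hsub : Set.uIcc 0 x ⊆ Set.Iio 1 := by
    rw [Set.uIcc_of_le hx0]
    exact fun t ht ↦ ht.2.trans_lt hx1
  have hFTC : ∫ t in 0..x, SpDeriv p t = Sp p x := by
    rw [intervalIntegral.integral_eq_sub_of_hasDerivAt
      (fun t ht ↦ hasDerivAt_Sp hp0 (hsub ht))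
      ((continuousOn_SpDeriv hp0).mono hsub).intervalIntegrable, Sp_zero hp0, sub_zero]
  have h := hasSum_div_succ_mul_pow_succ_of_hasSum
    (fun i ↦ mul_nonneg (by positivity) (aCoeff_nonneg hp0.le (i + 1))) hx0
    (fun t ht ↦ hasSum_succ_mul_aCoeff_succ_mul_pow hp0.le
      (abs_lt.mpr ⟨by linarith [ht.1], ht.2.trans_lt hx1⟩))
  rw [hFTC] at h
  refine h.congr_fun fun i ↦ ?_
  field_simp

theorem stmt3 (p : ℝ) (hp0 : 0 < p) (hp1 : p < 1) :
    ∀ x : ℝ, 0 ≤ x → x < 1 →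
      HasSum (fun i : ℕ => aCoeff p (i + 1) * x ^ (i + 1)) (Sp p x) :=
  stmt3_general p hp0
end

section
/- For every p ∈ (0,1] and every integer i ≥ 1, the partial binomial sum satisfies (1/2)·(1+p)^{2i−1} ≤ ∑_{k=0}^{i−1} binom(2i−1,k)·p^k < (1+p)^{2i−1}; consequently the power-series coefficients satisfy 1/(2i) ≤ a_i(p) < 1/i. -/
open Real Filter

theorem stmt4 (p : ℝ) (hp0 : 0 < p) (hp1 : p ≤ 1) (i : ℕ) (hi : 1 ≤ i) :
    ((1 / 2) * (1 + p) ^ (2 * i - 1) ≤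
        ∑ k ∈ Finset.range i, (Nat.choose (2 * i - 1) k : ℝ) * p ^ k ∧
      (∑ k ∈ Finset.range i, (Nat.choose (2 * i - 1) k : ℝ) * p ^ k) <
        (1 + p) ^ (2 * i - 1)) ∧
    (1 / (2 * (i : ℝ)) ≤ aCoeff p i ∧ aCoeff p i < 1 / (i : ℝ)) := by
  have hp0' : (0:ℝ) ≤ p := hp0.le
  set n := 2 * i - 1 with hn
  have hn1 : n + 1 = 2 * i := by omega
  set f : ℕ → ℝ := fun k => (n.choose k : ℝ) * p ^ k with hf
  have hsum : (1 + p) ^ n = ∑ k ∈ Finset.range (n + 1), f k := by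
    rw [add_comm, add_pow]
    exact Finset.sum_congr rfl fun k _ => by simp [hf, mul_comm]
  have hsplit : ∑ k ∈ Finset.range (n + 1), f k =
      (∑ k ∈ Finset.range i, f k) + ∑ k ∈ Finset.Ico i (n + 1), f k :=
    (Finset.sum_range_add_sum_Ico f (by omega)).symm
  have htail_le : ∑ k ∈ Finset.Ico i (n + 1), f k ≤ ∑ k ∈ Finset.range i, f k := by
    rw [Finset.sum_Ico_eq_sum_range]
    have hcount : n + 1 - i = i := by omega
    rw [hcount]
    calc ∑ j ∈ Finset.range i, f (i + j)
        ≤ ∑ j ∈ Finset.range i, f (i - 1 - j) := by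
          apply Finset.sum_le_sum
          intro j hj
          have hj' : j < i := Finset.mem_range.mp hj
          have hch : n.choose (i + j) = n.choose (i - 1 - j) := by
            rw [← Nat.choose_symm (show i + j ≤ n by omega)]
            congr 1; omega
          simp only [hf, hch]
          exact mul_le_mul_of_nonneg_left
            (pow_le_pow_of_le_one hp0' hp1 (by omega)) (Nat.cast_nonneg _)
      _ = ∑ j ∈ Finset.range i, f j := Finset.sum_range_reflect f i
  have htail_pos : 0 < ∑ k ∈ Finset.Ico i (n + 1), f k := by
    apply Finset.sum_pos
    · intro k hk
      have hk' : k ≤ n := by have := Finset.mem_Ico.mp hk; omega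
      exact mul_pos (by exact_mod_cast Nat.choose_pos hk') (pow_pos hp0 k)
    · exact ⟨i, Finset.mem_Ico.mpr ⟨le_rfl, by omega⟩⟩
  have hlow : (1 / 2) * (1 + p) ^ n ≤ ∑ k ∈ Finset.range i, f k := by
    nlinarith [hsum, hsplit, htail_le]
  have hhigh : (∑ k ∈ Finset.range i, f k) < (1 + p) ^ n := by
    nlinarith [hsum, hsplit, htail_pos]
  refine ⟨⟨hlow, hhigh⟩, ?_, ?_⟩
  · have hi' : (0:ℝ) < (i : ℝ) := by exact_mod_cast hi
    have hD : (0:ℝ) < (i:ℝ) * (1 + p) ^ n := mul_pos hi' (pow_pos (by linarith) n)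
    unfold aCoeff
    rw [le_div_iff₀ hD]
    have : 1 / (2 * (i:ℝ)) * ((i:ℝ) * (1 + p) ^ n) = (1/2) * (1+p)^n := by
      field_simp
    rw [show (2*i-1 : ℕ) = n from rfl, this]
    exact hlow
  · have hi' : (0:ℝ) < (i : ℝ) := by exact_mod_cast hi
    have hD : (0:ℝ) < (i:ℝ) * (1 + p) ^ n := mul_pos hi' (pow_pos (by linarith) n)
    unfold aCoeff
    rw [div_lt_iff₀ hD]
    have : 1 / (i:ℝ) * ((i:ℝ) * (1 + p) ^ n) = (1+p)^n := by
      field_simp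
    rw [show (2*i-1 : ℕ) = n from rfl, this]
    exact hhigh
end

section
/- For every p ∈ (0,1), the partial sums G_N(p) = ∑_{i=1}^N a_i(p) tend to +∞ as N → ∞; that is, the series ∑_{i=1}^∞ a_i(p) diverges. (Hence the untruncated power series ρ(x) = ∑ a_i(p) x^i, after any normalization, is not a valid generator degree distribution because its coefficient sum is infinite.) -/
open Real Filter

lemma half_le_sum (p : ℝ) (hp0 : 0 ≤ p) (hp1 : p ≤ 1) (i : ℕ) (hi : 1 ≤ i) :
    (1 + p) ^ (2 * i - 1) ≤
      2 * ∑ k ∈ Finset.range i, (Nat.choose (2 * i - 1) k : ℝ) * p ^ k := by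
  set f : ℕ → ℝ := fun k => (Nat.choose (2 * i - 1) k : ℝ) * p ^ k with hf
  have h2i : 2 * i - 1 + 1 = 2 * i := by omega
  have hT : (1 + p) ^ (2 * i - 1) = ∑ k ∈ Finset.range (2 * i), f k := by
    rw [add_comm, add_pow, h2i]
    refine Finset.sum_congr rfl fun k hk => ?_
    simp [hf, mul_comm]
  have hsplit : ∑ k ∈ Finset.range (2 * i), f k
      = ∑ k ∈ Finset.range i, f k + ∑ k ∈ Finset.range i, f (2 * i - 1 - k) := by
    have h : 2 * i = i + i := by omega
    rw [h, Finset.sum_range_add]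
    congr 1
    rw [← Finset.sum_range_reflect (fun j => f (i + j)) i]
    refine Finset.sum_congr rfl fun j hj => ?_
    simp only [Finset.mem_range] at hj
    congr 1
    omega
  have hle : ∑ k ∈ Finset.range i, f (2 * i - 1 - k) ≤ ∑ k ∈ Finset.range i, f k := by
    refine Finset.sum_le_sum fun k hk => ?_
    simp only [Finset.mem_range] at hk
    have hsym : Nat.choose (2 * i - 1) (2 * i - 1 - k) = Nat.choose (2 * i - 1) k :=
      Nat.choose_symm (by omega)
    have hpow : p ^ (2 * i - 1 - k) ≤ p ^ k :=
      pow_le_pow_of_le_one hp0 hp1 (by omega)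
    simp only [hf, hsym]
    exact mul_le_mul_of_nonneg_left hpow (by positivity)
  rw [hT, hsplit]
  linarith

lemma aCoeff_ge (p : ℝ) (hp0 : 0 < p) (hp1 : p < 1) (i : ℕ) (hi : 1 ≤ i) :
    1 / (2 * (i : ℝ)) ≤ aCoeff p i := by
  have hipos : (0 : ℝ) < (i : ℝ) := by exact_mod_cast hi
  have hppos : (0 : ℝ) < (1 + p) ^ (2 * i - 1) := by positivity
  have hkey := half_le_sum p hp0.le hp1.le i hi
  rw [aCoeff, le_div_iff₀ (by positivity)]
  have heq : 1 / (2 * (i : ℝ)) * ((i : ℝ) * (1 + p) ^ (2 * i - 1))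
      = (1 + p) ^ (2 * i - 1) / 2 := by
    field_simp
  rw [heq]
  linarith

theorem stmt5 (p : ℝ) (hp0 : 0 < p) (hp1 : p < 1) :
    Filter.Tendsto (fun N : ℕ => Gpart p N) Filter.atTop Filter.atTop := by
  have hmono : ∀ N : ℕ, (1 / 2) * ∑ i ∈ Finset.range N, (1 : ℝ) / (i + 1) ≤ Gpart p N := by
    intro N
    have h1 : (1 / 2 : ℝ) * ∑ i ∈ Finset.range N, (1 : ℝ) / (i + 1)
        = ∑ i ∈ Finset.Icc 1 N, 1 / (2 * (i : ℝ)) := by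
      rw [Finset.mul_sum, ← Finset.Ico_add_one_right_eq_Icc, Finset.sum_Ico_eq_sum_range]
      refine Finset.sum_congr (by norm_num) fun k hk => ?_
      push_cast
      rw [div_mul_div_comm, one_mul]
      congr 1
      ring
    rw [h1]
    refine Finset.sum_le_sum fun i hi => ?_
    exact aCoeff_ge p hp0 hp1 i (Finset.mem_Icc.mp hi).1
  have hH : Filter.Tendsto (fun N : ℕ =>
      (1 / 2 : ℝ) * ∑ i ∈ Finset.range N, (1 : ℝ) / (i + 1)) Filter.atTop Filter.atTop := by
    exact (Real.tendsto_sum_range_one_div_nat_succ_atTop).const_mul_atTop (by norm_num)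
  exact tendsto_atTop_mono hmono hH
end
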